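/- arXiv:1111.5664 — 3 statements merged into one kernel-verified Lean document; each statement's English description precedes it below -/
import Mathlib

section
/- Let φ: P^N ⇢ P^N be dominant over Q̄ with dynamical degree δ_φ and canonical height ĥ_φ(P) = limsup_n h(φ^n(P))/(n^{ℓ_φ} δ_φ^n). If ĥ_φ(P) > 0, then the arithmetic degree α_φ(P) = limsup_n h(φ^n(P))^{1/n} equals δ_φ. -/
/-!
Write `a n = h (φ^[n] P)`. For the upper bound pick `δ < r` and `k` with `D k ≤ r ^ k`;
iterating `h (φ^[k] Q) ≤ r ^ k * h Q + C` gives `a n ≤ K * n * r ^ n`, so `a n ^ (1 / n) ≤ r`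
in the limit. For the lower bound, `ĥ_φ(P) > 0` yields `c > 0` with `c * n ^ ℓ * δ ^ n ≤ a n`
infinitely often, and `(c * n ^ ℓ * δ ^ n) ^ (1 / n) → δ`.
-/

open Filter Topology

lemma tendsto_mul_rpow_mul_pow_rpow_inv {c : ℝ} (hc : 0 < c) (ℓ : ℝ) {r : ℝ} (hr : 0 ≤ r) :
    Tendsto (fun n : ℕ => (c * (n : ℝ) ^ ℓ * r ^ n) ^ (n : ℝ)⁻¹) atTop (𝓝 r) := by
  have hinv : Tendsto (fun n : ℕ => (n : ℝ)⁻¹) atTop (𝓝 0) :=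
    tendsto_inv_atTop_zero.comp tendsto_natCast_atTop_atTop
  have hc' : Tendsto (fun n : ℕ => c ^ (n : ℝ)⁻¹) atTop (𝓝 1) := by
    simpa using tendsto_const_nhds.rpow hinv (Or.inl hc.ne')
  have hn : Tendsto (fun n : ℕ => ((n : ℝ) ^ (n : ℝ)⁻¹) ^ ℓ) atTop (𝓝 1) := by
    simpa [one_div, Function.comp_def] using
      (tendsto_rpow_div.comp tendsto_natCast_atTop_atTop).rpow_const (p := ℓ) (Or.inl one_ne_zero)
  have hlim :
      Tendsto (fun n : ℕ => c ^ (n : ℝ)⁻¹ * ((n : ℝ) ^ (n : ℝ)⁻¹) ^ ℓ * r) atTop (𝓝 r) := by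
    simpa using (hc'.mul hn).mul_const r
  refine hlim.congr' ?_
  filter_upwards [eventually_gt_atTop 0] with n hn
  have hn0 : (0 : ℝ) < n := by exact_mod_cast hn
  rw [Real.mul_rpow (by positivity) (by positivity), Real.mul_rpow hc.le (by positivity),
    ← Real.rpow_natCast r n, ← Real.rpow_mul hr, mul_inv_cancel₀ hn0.ne', Real.rpow_one,
    ← Real.rpow_mul hn0.le, ← Real.rpow_mul hn0.le, mul_comm ℓ]

lemma Real.limsup_eq_of_forall_eventually_le_of_forall_frequently_ge {ι : Type*} {l : Filter ι}
    {u : ι → ℝ} {a : ℝ} (hle : ∀ s, a < s → ∀ᶠ i in l, u i ≤ s)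
    (hge : ∀ s < a, ∃ᶠ i in l, s ≤ u i) :
    limsup u l = a := by
  have hbdd : l.IsBoundedUnder (· ≤ ·) u :=
    isBoundedUnder_of_eventually_le (hle _ (lt_add_one a))
  have hcobdd : l.IsCoboundedUnder (· ≤ ·) u :=
    IsCoboundedUnder.of_frequently_ge (hge _ (sub_one_lt a))
  exact le_antisymm (le_of_forall_gt_imp_ge_of_dense fun s hs => limsup_le_of_le hcobdd (hle s hs))
    (le_of_forall_lt_imp_le_of_dense fun s hs => le_limsup_of_frequently_le (hge s hs) hbdd)

lemma exists_pos_frequently_mul_le_of_limsup_ofReal_div_pos {ι : Type*} {l : Filter ι}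
    {a b : ι → ℝ} (hb : ∀ᶠ i in l, 0 < b i)
    (hpos : 0 < limsup (fun i => ENNReal.ofReal (a i / b i)) l) :
    ∃ c > 0, ∃ᶠ i in l, c * b i ≤ a i := by
  obtain ⟨c, hc0, hc⟩ := exists_between hpos
  have hctop : c ≠ ⊤ := (hc.trans_le le_top).ne
  refine ⟨c.toReal, ENNReal.toReal_pos hc0.ne' hctop, ?_⟩
  refine ((frequently_lt_of_lt_limsup (by isBoundedDefault) hc).and_eventually hb).mono ?_
  rintro i ⟨hci, hbi⟩
  exact ((lt_div_iff₀ hbi).mp ((ENNReal.lt_ofReal_iff_toReal_lt hctop).mp hci)).le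

section Iterate

variable {X : Type*} {h : X → ℝ}

lemma iterate_le_pow_mul_add {ψ : X → X} {A C : ℝ} (hA : 1 ≤ A) (hC : 0 ≤ C)
    (hψ : ∀ Q, h (ψ Q) ≤ A * h Q + C) (m : ℕ) (Q : X) :
    h (ψ^[m] Q) ≤ A ^ m * (h Q + m * C) := by
  induction m with
  | zero => simp
  | succ m ih =>
    have hA0 : 0 ≤ A := zero_le_one.trans hA
    have hCA : C ≤ A ^ (m + 1) * C := le_mul_of_one_le_left hC (one_le_pow₀ hA)
    calc h (ψ^[m + 1] Q) ≤ A * h (ψ^[m] Q) + C := by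
          rw [Function.iterate_succ_apply']; exact hψ _
      _ ≤ A * (A ^ m * (h Q + m * C)) + A ^ (m + 1) * C := by gcongr
      _ = A ^ (m + 1) * (h Q + (m + 1 : ℕ) * C) := by push_cast; ring

lemma exists_iterate_le_mul_pow (hnn : ∀ x, 0 ≤ h x) {φ : X → X} {k : ℕ} (hk : 0 < k)
    {r C : ℝ} (hr : 1 ≤ r) (hC : 0 ≤ C) (hφ : ∀ Q, h (φ^[k] Q) ≤ r ^ k * h Q + C) (P : X) :
    ∃ K > 0, ∀ n : ℕ, 0 < n → h (φ^[n] P) ≤ K * n * r ^ n := by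
  set B := ∑ j ∈ Finset.range k, h (φ^[j] P)
  have hB : 0 ≤ B := Finset.sum_nonneg fun j _ => hnn _
  refine ⟨B + C + 1, by positivity, fun n hn => ?_⟩
  have hj : h (φ^[n % k] P) ≤ B := Finset.single_le_sum (f := fun j => h (φ^[j] P))
    (fun j _ => hnn _) (Finset.mem_range.2 (Nat.mod_lt n hk))
  have hm : ((n / k : ℕ) : ℝ) ≤ n := by exact_mod_cast Nat.div_le_self n k
  have hn1 : (1 : ℝ) ≤ n := by exact_mod_cast hn
  have hpow : (r ^ k) ^ (n / k) ≤ r ^ n := by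
    rw [← pow_mul]; exact pow_le_pow_right₀ hr (Nat.mul_div_le n k)
  have hlin : B + n * C ≤ (B + C + 1) * n := by nlinarith
  calc h (φ^[n] P) = h ((φ^[k])^[n / k] (φ^[n % k] P)) := by
        rw [← Function.iterate_mul, ← Function.iterate_add_apply, Nat.div_add_mod]
    _ ≤ (r ^ k) ^ (n / k) * (h (φ^[n % k] P) + (n / k : ℕ) * C) :=
        iterate_le_pow_mul_add (one_le_pow₀ hr) hC hφ _ _
    _ ≤ r ^ n * (B + n * C) := by gcongr; exact add_nonneg (hnn _) (by positivity)
    _ ≤ r ^ n * ((B + C + 1) * n) := by gcongr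
    _ = (B + C + 1) * n * r ^ n := by ring

end Iterate

/-- `D n` plays the role of `deg (φ^n)`. -/
theorem stmt8_general {X : Type*} (φ : X → X) (h : X → ℝ) (hnn : ∀ x, 0 ≤ h x)
    (D : ℕ → ℝ) (hD1 : ∀ n, 1 ≤ D n)
    (hht : ∀ k : ℕ, ∃ C : ℝ, ∀ Q, h (φ^[k] Q) ≤ D k * h Q + C)
    (δ : ℝ) (hδ : Tendsto (fun n : ℕ => D n ^ ((n : ℝ)⁻¹)) atTop (𝓝 δ))
    (ℓ : ℝ) (P : X)
    (hpos : 0 < Filter.limsup (fun n : ℕ =>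
        ENNReal.ofReal (h (φ^[n] P) / ((n : ℝ) ^ ℓ * δ ^ n))) atTop) :
    Filter.limsup (fun n : ℕ => h (φ^[n] P) ^ ((n : ℝ)⁻¹)) atTop = δ := by
  have hδ1 : 1 ≤ δ := ge_of_tendsto' hδ fun n => Real.one_le_rpow (hD1 n) (by positivity)
  refine Real.limsup_eq_of_forall_eventually_le_of_forall_frequently_ge (fun s hs => ?_)
    (fun s hs => ?_)
  · obtain ⟨r, hδr, hrs⟩ := exists_between hs
    have hr : 1 ≤ r := hδ1.trans hδr.le
    obtain ⟨k, hk, hDk⟩ := ((eventually_gt_atTop 0).and (hδ.eventually_lt_const hδr)).exists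
    have hDkr : D k ≤ r ^ k := by
      have := (Real.rpow_inv_lt_iff_of_pos (by linarith [hD1 k]) (by linarith)
        (Nat.cast_pos.2 hk)).1 hDk
      exact_mod_cast this.le
    obtain ⟨C, hC⟩ := hht k
    obtain ⟨K, hK, hgrowth⟩ := exists_iterate_le_mul_pow hnn hk hr (le_max_right C 0)
      (fun Q => (hC Q).trans (by gcongr; exacts [hnn Q, le_max_left C 0])) P
    have hroot := tendsto_mul_rpow_mul_pow_rpow_inv hK 1 (zero_le_one.trans hr)
    filter_upwards [hroot.eventually_lt_const hrs, eventually_gt_atTop 0] with n hlt hn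
    refine (Real.rpow_le_rpow (hnn _) ?_ (by positivity)).trans hlt.le
    simpa using hgrowth n hn
  · have hb : ∀ᶠ n : ℕ in atTop, 0 < (n : ℝ) ^ ℓ * δ ^ n := by
      filter_upwards [eventually_gt_atTop 0] with n hn
      have : (0 : ℝ) < n := by exact_mod_cast hn
      positivity
    obtain ⟨c, hc, hfreq⟩ := exists_pos_frequently_mul_le_of_limsup_ofReal_div_pos hb hpos
    refine (hfreq.and_eventually ((tendsto_mul_rpow_mul_pow_rpow_inv hc ℓ
      (by linarith)).eventually_const_lt hs)).mono fun n ⟨hle, hlt⟩ => ?_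
    rw [← mul_assoc] at hle
    exact hlt.le.trans (Real.rpow_le_rpow (by positivity) hle (by positivity))

/-- If the canonical height `ĥ_φ(P) = limsup h(φ^n P)/(n^ℓ δ^n)` is positive,
then the arithmetic degree `α_φ(P) = limsup h(φ^n P)^(1/n)` equals the
dynamical degree `δ = lim (deg φ^n)^(1/n)`. Here `D n` plays the role of
`deg (φ^n)` and for each `k` one has `h (φ^k Q) ≤ D k * h Q + C_k`. -/
theorem stmt8 {X : Type*} (φ : X → X) (h : X → ℝ) (hnn : ∀ x, 0 ≤ h x)
    (D : ℕ → ℝ) (hD1 : ∀ n, 1 ≤ D n)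
    (hDsub : ∀ m n, D (m + n) ≤ D m * D n)
    (hht : ∀ k : ℕ, ∃ C : ℝ, ∀ Q, h (φ^[k] Q) ≤ D k * h Q + C)
    (δ : ℝ) (hδ : Tendsto (fun n : ℕ => D n ^ ((n : ℝ)⁻¹)) atTop (𝓝 δ))
    (ℓ : ℝ) (hℓ : 0 ≤ ℓ) (P : X)
    (hpos : 0 < Filter.limsup (fun n : ℕ =>
        ENNReal.ofReal (h (φ^[n] P) / ((n : ℝ) ^ ℓ * δ ^ n))) atTop) :
    Filter.limsup (fun n : ℕ => h (φ^[n] P) ^ ((n : ℝ)⁻¹)) atTop = δ :=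
  stmt8_general φ h hnn D hD1 hht δ hδ ℓ P hpos
end

section
/- Let A be an N×N integer matrix with det(A) ≠ 0 such that no eigenvalue of A is a root of unity. Then a point P ∈ (Q̄^*)^N is preperiodic for the monomial map φ_A if and only if every coordinate of P is a root of unity. -/
/-! Since `φ_{AB} = φ_A ∘ φ_B`, we have `φ_A^n = φ_{A^n}` and a relation
`φ_A^n P = φ_A^m P` with `m < n` says `φ_B P = 1` for `B = A^n - A^m = A^m (A^(n-m) - 1)`.
This `B` is nonsingular because `A` is and `1` is not an eigenvalue of `A^(n-m)`; applying
`φ_{adj B}` gives `P i ^ det B = 1`. Conversely, if the coordinates of `P` are torsion they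
generate a finite subgroup `H`, and every iterate of `P` lies in the finite set `H^N`. -/

/-- The monomial map associated to an integer matrix `A`: the `i`-th
coordinate of `monomialMap A P` is `∏ j, (P j) ^ (A i j)`. -/
def monomialMap {N : ℕ} {G : Type*} [CommGroup G]
    (A : Matrix (Fin N) (Fin N) ℤ) (P : Fin N → G) : Fin N → G :=
  fun i => ∏ j, P j ^ A i j

lemma zpow_sum {G ι : Type*} [CommGroup G] (x : G) (s : Finset ι) (f : ι → ℤ) :
    x ^ (∑ i ∈ s, f i) = ∏ i ∈ s, x ^ f i := by
  induction s using Finset.cons_induction <;> simp [zpow_add, *]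

lemma Subgroup.finite_closure_of_isOfFinOrder {G : Type*} [CommGroup G] {s : Set G} [Finite s]
    (hs : ∀ x ∈ s, IsOfFinOrder x) : Finite (Subgroup.closure s) := by
  have hle : Subgroup.closure s ≤ CommGroup.torsion G := (Subgroup.closure_le _).2 hs
  exact CommGroup.finite_of_fg_isMulTorsion _ fun x => Submonoid.isOfFinOrder_coe.1 (hle x.2)

lemma Function.exists_iterate_eq_of_mapsTo {α : Type*} {f : α → α} {s : Set α} (hs : s.Finite)
    (hf : Set.MapsTo f s s) {x : α} (hx : x ∈ s) : ∃ m n, m < n ∧ f^[n] x = f^[m] x := by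
  obtain ⟨m, n, hmn, h⟩ := hs.exists_lt_map_eq_of_forall_mem fun n => hf.iterate n hx
  exact ⟨m, n, hmn, h.symm⟩

namespace Matrix

variable {ι : Type*} [Fintype ι] [DecidableEq ι]

lemma det_pow_sub_one_ne_zero {K : Type*} [Field K] [IsAlgClosed K] {M : Matrix ι ι K}
    {k : ℕ} (hk : 0 < k) (hM : ∀ μ ∈ spectrum K M, μ ^ k ≠ 1) : (M ^ k - 1).det ≠ 0 := by
  have h1 : (1 : K) ∉ spectrum K (M ^ k) := by
    rw [spectrum.map_pow_of_pos M hk]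
    rintro ⟨μ, hμ, hμk⟩
    exact hM μ hμ hμk
  rwa [spectrum.mem_iff, map_one, not_not, ← neg_sub, IsUnit.neg_iff, isUnit_iff_isUnit_det,
    isUnit_iff_ne_zero] at h1

lemma det_pow_sub_one_ne_zero_of_map {R K : Type*} [CommRing R] [Field K] [IsAlgClosed K]
    (f : R →+* K) {A : Matrix ι ι R} {k : ℕ} (hk : 0 < k)
    (hA : ∀ μ ∈ spectrum K (A.map f), μ ^ k ≠ 1) : (A ^ k - 1).det ≠ 0 := by
  intro h
  apply det_pow_sub_one_ne_zero hk hA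
  rw [← f.mapMatrix_apply, ← map_pow, ← map_one f.mapMatrix, ← map_sub, ← f.map_det, h, map_zero]

lemma det_pow_sub_pow_ne_zero {R : Type*} [CommRing R] [NoZeroDivisors R]
    {A : Matrix ι ι R} {m n : ℕ} (hA : A.det ≠ 0) (hmn : m ≤ n) (h : (A ^ (n - m) - 1).det ≠ 0) :
    (A ^ n - A ^ m).det ≠ 0 := by
  have hfac : A ^ n - A ^ m = A ^ m * (A ^ (n - m) - 1) := by
    rw [mul_sub, mul_one, ← pow_add, Nat.add_sub_cancel' hmn]
  rw [hfac, det_mul, det_pow]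
  exact mul_ne_zero (pow_ne_zero m hA) h

end Matrix

section MonomialMap

variable {N : ℕ} {G : Type*} [CommGroup G]

lemma monomialMap_diagonal (d : Fin N → ℤ) (P : Fin N → G) (i : Fin N) :
    monomialMap (Matrix.diagonal d) P i = P i ^ d i := by
  simp [monomialMap, Matrix.diagonal_apply]

lemma monomialMap_one_left (P : Fin N → G) : monomialMap (1 : Matrix (Fin N) (Fin N) ℤ) P = P :=
  funext fun i => by simpa using monomialMap_diagonal 1 P i

lemma monomialMap_one_right (A : Matrix (Fin N) (Fin N) ℤ) : monomialMap A (1 : Fin N → G) = 1 :=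
  funext fun i => by simp [monomialMap]

lemma monomialMap_mul (A B : Matrix (Fin N) (Fin N) ℤ) (P : Fin N → G) :
    monomialMap (A * B) P = monomialMap A (monomialMap B P) := by
  funext i
  simp only [monomialMap, Matrix.mul_apply, zpow_sum, ← Finset.prod_zpow, ← zpow_mul]
  rw [Finset.prod_comm]
  simp only [mul_comm]

lemma monomialMap_sub (A B : Matrix (Fin N) (Fin N) ℤ) (P : Fin N → G) :
    monomialMap (A - B) P = monomialMap A P / monomialMap B P :=
  funext fun i => by
    simp only [monomialMap, Matrix.sub_apply, zpow_sub, Pi.div_apply, Finset.prod_mul_distrib,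
      Finset.prod_inv_distrib, div_eq_mul_inv]

lemma iterate_monomialMap (A : Matrix (Fin N) (Fin N) ℤ) (n : ℕ) :
    (monomialMap A)^[n] = monomialMap (G := G) (A ^ n) := by
  induction n with
  | zero => exact funext fun P => (monomialMap_one_left P).symm
  | succ n ih =>
    rw [Function.iterate_succ', ih, pow_succ']
    exact funext fun P => (monomialMap_mul A _ P).symm

lemma zpow_det_eq_one_of_monomialMap_eq_one {B : Matrix (Fin N) (Fin N) ℤ} {P : Fin N → G}
    (h : monomialMap B P = 1) (i : Fin N) : P i ^ B.det = 1 := by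
  have := congrFun (monomialMap_mul B.adjugate B P) i
  rwa [Matrix.adjugate_mul, Matrix.smul_one_eq_diagonal, monomialMap_diagonal, h,
    monomialMap_one_right] at this

lemma isOfFinOrder_of_iterate_monomialMap_eq {A : Matrix (Fin N) (Fin N) ℤ} {P : Fin N → G}
    {m n : ℕ} (hdet : (A ^ n - A ^ m).det ≠ 0)
    (h : (monomialMap A)^[n] P = (monomialMap A)^[m] P) (i : Fin N) : IsOfFinOrder (P i) := by
  have hP : monomialMap (A ^ n - A ^ m) P = 1 := by
    rw [monomialMap_sub, ← iterate_monomialMap, ← iterate_monomialMap, h, div_self']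
  exact isOfFinOrder_iff_zpow_eq_one.2 ⟨_, hdet, zpow_det_eq_one_of_monomialMap_eq_one hP i⟩

lemma monomialMap_mem_subgroup (A : Matrix (Fin N) (Fin N) ℤ) {H : Subgroup G} {P : Fin N → G}
    (hP : ∀ j, P j ∈ H) (i : Fin N) : monomialMap A P i ∈ H :=
  Subgroup.prod_mem _ fun j _ => zpow_mem (hP j) _

lemma exists_iterate_monomialMap_eq_of_isOfFinOrder (A : Matrix (Fin N) (Fin N) ℤ)
    {P : Fin N → G} (hP : ∀ i, IsOfFinOrder (P i)) :
    ∃ m n, m < n ∧ (monomialMap A)^[n] P = (monomialMap A)^[m] P := by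
  let H := Subgroup.closure (Set.range P)
  have : Finite H := Subgroup.finite_closure_of_isOfFinOrder (by rintro _ ⟨i, rfl⟩; exact hP i)
  refine Function.exists_iterate_eq_of_mapsTo (s := Set.univ.pi fun _ => (H : Set G))
    (Set.Finite.pi fun _ => Set.toFinite _) ?_ ?_
  · exact fun Q hQ i _ => monomialMap_mem_subgroup A (fun j => hQ j trivial) i
  · exact fun i _ => Subgroup.subset_closure ⟨i, rfl⟩

end MonomialMap

/-- If no complex eigenvalue of the integer matrix `A` (with `det A ≠ 0`) is a
root of unity, then a point `P ∈ (ℚ̄*)^N` is preperiodic for the monomial map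
`φ_A` if and only if every coordinate of `P` is a root of unity. -/
theorem stmt13 {N : ℕ} (A : Matrix (Fin N) (Fin N) ℤ) (hdet : A.det ≠ 0)
    (hnoroot : ∀ μ ∈ spectrum ℂ (A.map (Int.cast : ℤ → ℂ)),
      ∀ k : ℕ, 0 < k → μ ^ k ≠ 1)
    (P : Fin N → (AlgebraicClosure ℚ)ˣ) :
    (∃ m n : ℕ, m < n ∧ (monomialMap A)^[n] P = (monomialMap A)^[m] P) ↔
      ∀ i, ∃ k : ℕ, 0 < k ∧ P i ^ k = 1 := by
  simp only [← isOfFinOrder_iff_pow_eq_one]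
  constructor
  · rintro ⟨m, n, hmn, h⟩
    have hk : 0 < n - m := Nat.sub_pos_of_lt hmn
    have hA : (A ^ (n - m) - 1).det ≠ 0 :=
      Matrix.det_pow_sub_one_ne_zero_of_map (Int.castRingHom ℂ) hk fun μ hμ => hnoroot μ hμ _ hk
    exact isOfFinOrder_of_iterate_monomialMap_eq (Matrix.det_pow_sub_pow_ne_zero hdet hmn.le hA) h
  · exact exists_iterate_monomialMap_eq_of_isOfFinOrder A
end

section
/- Let d ≥ 2, N ≥ 1, and let φ be the monomial map of A^N given by φ(X_1,...,X_N) = (X_1^d X_2, X_2^d X_3, ..., X_{N-1}^d X_N, X_N^d). Then deg(φ^n) = Σ_{k=0}^{N-1} C(n,k) d^{n-k} for all n ≥ 1, and consequently lim_{n→∞} deg(φ^n)/(d^n n^{N-1}) = 1/((N-1)! d^{N-1}). -/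
open MvPolynomial Filter Topology Finset

/-- Composition of polynomial self-maps of affine space:
`(compMap f g) i = f i` with `g` substituted for the variables,
i.e. the polynomial map `f ∘ g`. -/
noncomputable def compMap {m : ℕ} (f g : Fin m → MvPolynomial (Fin m) ℚ) :
    Fin m → MvPolynomial (Fin m) ℚ :=
  fun i => MvPolynomial.bind₁ g (f i)

/-- The degree of a polynomial self-map of affine space: the maximum of the
total degrees of its coordinate polynomials. -/
noncomputable def degMap {m : ℕ} (f : Fin m → MvPolynomial (Fin m) ℚ) : ℕ :=
  Finset.univ.sup fun i => (f i).totalDegree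

/-- The monomial map `φ(X₁,…,X_N) = (X₁^d X₂, X₂^d X₃, …, X_{N-1}^d X_N, X_N^d)`. -/
noncomputable def phiJordan (d N : ℕ) : Fin N → MvPolynomial (Fin N) ℚ :=
  fun i => if h : (i : ℕ) + 1 < N then X i ^ d * X ⟨(i : ℕ) + 1, h⟩ else X i ^ d

/-- exponents of the iterated map -/
def cfun (d n i j : ℕ) : ℕ := if i ≤ j then n.choose (j - i) * d ^ (n - (j - i)) else 0

noncomputable def cexp (d N n : ℕ) (i : Fin N) : Fin N →₀ ℕ :=
  Finsupp.equivFunOnFinite.symm fun j => cfun d n i j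

lemma cexp_apply (d N n : ℕ) (i j : Fin N) : cexp d N n i j = cfun d n i j := rfl

noncomputable def rowexp (d N : ℕ) (j : Fin N) : Fin N →₀ ℕ :=
  Finsupp.single j d + (if h : (j:ℕ)+1 < N then Finsupp.single ⟨(j:ℕ)+1, h⟩ 1 else 0)

lemma phi_eq (d N : ℕ) (j : Fin N) : phiJordan d N j = monomial (rowexp d N j) 1 := by
  unfold phiJordan rowexp
  split_ifs with h
  · rw [X_pow_eq_monomial,
      show (X (⟨(j:ℕ)+1, h⟩ : Fin N) : MvPolynomial (Fin N) ℚ)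
        = monomial (Finsupp.single ⟨(j:ℕ)+1, h⟩ 1) 1 from rfl,
      monomial_mul, mul_one]
  · simp [X_pow_eq_monomial]

lemma rowexp_apply (d N : ℕ) (j l : Fin N) :
    rowexp d N j l = (if (j:ℕ) = (l:ℕ) then d else 0) +
      (if (j:ℕ)+1 = (l:ℕ) then 1 else 0) := by
  unfold rowexp
  rw [Finsupp.add_apply, Finsupp.single_apply]
  congr 1
  · simp [Fin.ext_iff]
  · split_ifs with h h2 h3
    · rw [Finsupp.single_apply, if_pos]; exact Fin.ext h2
    · rw [Finsupp.single_apply, if_neg]; exact fun he => h2 (Fin.ext_iff.mp he)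
    · exact absurd (h3 ▸ l.isLt) h
    · rfl

lemma key_arith (d n k : ℕ) (hk : 1 ≤ k) :
    (n+1).choose k * d ^ (n + 1 - k) =
      n.choose k * d ^ (n - k) * d + n.choose (k-1) * d ^ (n - (k-1)) := by
  obtain ⟨k, rfl⟩ := Nat.exists_eq_add_of_le hk
  rw [Nat.add_comm 1 k]
  rcases Nat.lt_trichotomy n k with h | h | h
  · have h1 : n + 1 < k + 1 := by omega
    simp [Nat.choose_eq_zero_of_lt h1, Nat.choose_eq_zero_of_lt h,
      Nat.choose_eq_zero_of_lt (show n < k + 1 by omega)]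
  · subst h
    simp [Nat.choose_self, Nat.choose_succ_self_right, Nat.choose_eq_zero_of_lt (Nat.lt_succ_self n)]
  · have h1 : n + 1 - (k+1) = n - k := by omega
    have h2 : n - k = (n - (k+1)) + 1 := by omega
    rw [Nat.choose_succ_succ', h1, Nat.add_sub_cancel, h2, pow_succ]
    ring

lemma cfun_succ (d n i l : ℕ) :
    cfun d (n+1) i l = cfun d n i l * d + (if 1 ≤ l then cfun d n i (l-1) else 0) := by
  unfold cfun
  rcases Nat.lt_or_ge l i with h | h
  · rw [if_neg (by omega)]
    rw [if_neg (by omega)]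
    split_ifs with h1 h2
    · omega
    · simp
    · simp
  · rcases Nat.eq_or_lt_of_le h with h1 | h1
    · subst h1
      rw [if_pos le_rfl, if_pos le_rfl, Nat.sub_self]
      simp only [Nat.choose_zero_right, one_mul, Nat.sub_zero]
      split_ifs with h2 h3
      · omega
      · rw [pow_succ]
        simp
      · rw [pow_succ]
        simp
    · rw [if_pos h, if_pos h, if_pos (by omega), if_pos (by omega)]
      have e1 : l - 1 - i = (l - i) - 1 := by omega
      have e2 : n + 1 - (l - i) = n + 1 - (l - i) := rfl
      rw [e1]
      exact key_arith d n (l - i) (by omega)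

lemma sum_exp (d N n : ℕ) (i : Fin N) :
    ∑ j : Fin N, cexp d N n i j • rowexp d N j = cexp d N (n+1) i := by
  ext l
  rw [Finset.sum_apply']
  simp only [Finsupp.smul_apply, rowexp_apply, smul_eq_mul, mul_add, cexp_apply]
  rw [Finset.sum_add_distrib]
  have e1 : ∑ j : Fin N, cfun d n (i:ℕ) (j:ℕ) * (if (j:ℕ) = (l:ℕ) then d else 0)
      = cfun d n i l * d := by
    rw [Finset.sum_eq_single l]
    · simp
    · intro b _ hb
      rw [if_neg (fun h => hb (Fin.ext h)), mul_zero]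
    · simp
  have e2 : ∑ j : Fin N, cfun d n (i:ℕ) (j:ℕ) * (if (j:ℕ)+1 = (l:ℕ) then 1 else 0)
      = if 1 ≤ (l:ℕ) then cfun d n i ((l:ℕ)-1) else 0 := by
    split_ifs with hl
    · rw [Finset.sum_eq_single (⟨(l:ℕ)-1, by omega⟩ : Fin N)]
      · rw [if_pos (by simp; omega)]
        simp
      · intro b _ hb
        rw [if_neg, mul_zero]
        intro h
        apply hb
        apply Fin.ext
        simp
        omega
      · simp
    · apply Finset.sum_eq_zero
      intro j _
      rw [if_neg (by omega), mul_zero]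
  rw [e1, e2, cfun_succ]

lemma cexp_zero (d N : ℕ) (i : Fin N) : cexp d N 0 i = Finsupp.single i 1 := by
  ext l
  rw [cexp_apply, Finsupp.single_apply]
  unfold cfun
  rcases Nat.lt_trichotomy (l:ℕ) (i:ℕ) with h | h | h
  · rw [if_neg (by omega), if_neg (fun he => by omega)]
  · rw [if_pos (by omega), if_pos (Fin.ext h.symm)]
    simp [h]
  · rw [if_pos (by omega), if_neg (fun he => by simp [Fin.ext_iff] at he; omega)]
    have : (l:ℕ) - (i:ℕ) ≠ 0 := by omega
    simp [Nat.choose_eq_zero_of_lt (by omega : 0 < (l:ℕ) - (i:ℕ))]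

lemma iter_eq (d N : ℕ) (n : ℕ) :
    (fun f => compMap f (phiJordan d N))^[n] (fun i => X i)
      = fun i => monomial (cexp d N n i) 1 := by
  induction n with
  | zero =>
    funext i
    simp [cexp_zero, X]
  | succ n ih =>
    rw [Function.iterate_succ_apply', ih]
    funext i
    show bind₁ (phiJordan d N) (monomial (cexp d N n i) 1) = _
    rw [bind₁_monomial, map_one, one_mul]
    have s1 : ∏ j ∈ (cexp d N n i).support, phiJordan d N j ^ cexp d N n i j
        = ∏ j : Fin N, phiJordan d N j ^ cexp d N n i j :=
      Finset.prod_subset (Finset.subset_univ _)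
        (fun j _ hj => by rw [Finsupp.notMem_support_iff.mp hj, pow_zero])
    have s2 : ∏ j : Fin N, phiJordan d N j ^ cexp d N n i j
        = ∏ j : Fin N, monomial (cexp d N n i j • rowexp d N j) 1 :=
      Finset.prod_congr rfl (fun j _ => by rw [phi_eq, monomial_pow, one_pow])
    rw [s1, s2, ← monomial_sum_one, sum_exp]

lemma totalDeg_iter (d N n : ℕ) (i : Fin N) :
    ((monomial (cexp d N n i)) (1:ℚ)).totalDegree
      = ∑ k ∈ Finset.range (N - i), n.choose k * d ^ (n - k) := by
  rw [totalDegree_monomial _ one_ne_zero,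
    Finsupp.sum_fintype _ _ (fun _ => rfl)]
  have e0 : ∑ j : Fin N, cexp d N n i j = ∑ m ∈ Finset.range N, cfun d n i m := by
    rw [← Fin.sum_univ_eq_sum_range (fun m => cfun d n (i:ℕ) m) N]
    rfl
  rw [e0]
  have e1 : ∑ m ∈ Finset.range N, cfun d n i m = ∑ m ∈ Finset.Ico (i:ℕ) N, cfun d n i m := by
    refine (Finset.sum_subset ?_ ?_).symm
    · intro m hm
      rw [Finset.mem_Ico] at hm
      exact Finset.mem_range.mpr hm.2
    · intro m hm hm2
      rw [Finset.mem_range] at hm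
      rw [Finset.mem_Ico, not_and_or] at hm2
      unfold cfun
      rw [if_neg (by omega)]
  rw [e1, Finset.sum_Ico_eq_sum_range]
  apply Finset.sum_congr rfl
  intro k _
  unfold cfun
  rw [if_pos (Nat.le_add_right _ _)]
  congr 2 <;> omega

lemma degMap_iter (d N : ℕ) (hN : 1 ≤ N) (n : ℕ) :
    degMap ((fun f => compMap f (phiJordan d N))^[n] (fun i => X i))
      = ∑ k ∈ Finset.range N, n.choose k * d ^ (n - k) := by
  rw [iter_eq]
  unfold degMap
  apply le_antisymm
  · apply Finset.sup_le
    intro i _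
    rw [totalDeg_iter]
    apply Finset.sum_le_sum_of_subset
    exact Finset.range_subset_range.mpr (by omega)
  · refine le_trans ?_ (Finset.le_sup (mem_univ (⟨0, hN⟩ : Fin N)))
    rw [totalDeg_iter]
    simp

lemma choose_div_pow_tendsto (k m : ℕ) (hkm : k ≤ m) :
    Tendsto (fun n : ℕ => (n.choose k : ℝ) / (n:ℝ)^m) atTop
      (𝓝 (if k = m then 1 / k.factorial else 0)) := by
  rcases eq_or_lt_of_le hkm with rfl | hlt
  · rw [if_pos rfl]
    have hfac : (0:ℝ) < k.factorial := by positivity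
    have hlow : Tendsto (fun n : ℕ => (((n + 1 - k : ℕ):ℝ)/(n:ℝ))^k / k.factorial)
        atTop (𝓝 (1 / k.factorial)) := by
      have h1 : Tendsto (fun n : ℕ => ((n + 1 - k : ℕ):ℝ)/(n:ℝ)) atTop (𝓝 1) := by
        have h2 : Tendsto (fun n : ℕ => 1 + ((1:ℝ) - k) * (1/(n:ℝ))) atTop (𝓝 1) := by
          simpa using (tendsto_one_div_atTop_nhds_zero_nat.const_mul ((1:ℝ) - k)).const_add 1
        apply h2.congr'
        filter_upwards [eventually_ge_atTop (k+1)] with n hn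
        have hn0 : (0:ℝ) < n := by exact_mod_cast (by omega : 0 < n)
        rw [Nat.cast_sub (by omega)]
        push_cast
        field_simp
        ring
      have := (h1.pow k).div_const (k.factorial : ℝ)
      simpa using this
    apply tendsto_of_tendsto_of_tendsto_of_le_of_le' hlow tendsto_const_nhds
    · filter_upwards [eventually_ge_atTop 1] with n hn
      have hn0 : (0:ℝ) < (n:ℝ)^k := by positivity
      rw [div_pow, div_div]
      rw [div_le_div_iff₀ (by positivity) (by positivity)]
      have := Nat.pow_le_choose (α := ℝ) k n
      rw [div_le_iff₀ hfac] at this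
      calc ((n + 1 - k : ℕ):ℝ)^k * (n:ℝ)^k ≤ ((n.choose k : ℝ) * k.factorial) * (n:ℝ)^k := by
            apply mul_le_mul_of_nonneg_right _ (le_of_lt hn0)
            exact this
        _ = (n.choose k:ℝ) * ((n:ℝ)^k * k.factorial) := by ring
    · filter_upwards [eventually_ge_atTop 1] with n hn
      have hn0 : (0:ℝ) < (n:ℝ)^k := by positivity
      have := Nat.choose_le_pow_div (α := ℝ) k n
      calc (n.choose k : ℝ) / (n:ℝ)^k ≤ ((n:ℝ)^k / k.factorial) / (n:ℝ)^k := by gcongr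
        _ = 1 / k.factorial := by field_simp
  · rw [if_neg (by omega)]
    apply tendsto_of_tendsto_of_tendsto_of_le_of_le' tendsto_const_nhds
      tendsto_one_div_atTop_nhds_zero_nat
    · filter_upwards with n
      positivity
    · filter_upwards [eventually_ge_atTop 1] with n hn
      have hn1 : (1:ℝ) ≤ (n:ℝ) := by exact_mod_cast hn
      have hn0 : (0:ℝ) < (n:ℝ) := by linarith
      have hc : (n.choose k : ℝ) ≤ (n:ℝ)^(m-1) := by
        calc (n.choose k : ℝ) ≤ (n:ℝ)^k := by exact_mod_cast Nat.choose_le_pow n k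
          _ ≤ (n:ℝ)^(m-1) := pow_le_pow_right₀ hn1 (by omega)
      have hm : (n:ℝ)^m = (n:ℝ)^(m-1) * n := by
        rw [← pow_succ]
        congr 1
        omega
      calc (n.choose k : ℝ) / (n:ℝ)^m ≤ (n:ℝ)^(m-1) / (n:ℝ)^m := by gcongr
        _ = 1 / n := by
            rw [hm, ← div_div, div_self (by positivity)]

/-- For `φ(X₁,…,X_N) = (X₁^d X₂, …, X_{N-1}^d X_N, X_N^d)` with `d ≥ 2`:
`deg (φ^n) = Σ_{k=0}^{N-1} C(n,k) d^{n-k}` for `n ≥ 1`, and hence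
`deg (φ^n)/(d^n n^{N-1}) → 1/((N-1)! d^{N-1})`. -/
theorem stmt15 (d N : ℕ) (hd : 2 ≤ d) (hN : 1 ≤ N) :
    (∀ n : ℕ, 1 ≤ n →
      degMap ((fun f => compMap f (phiJordan d N))^[n] (fun i => X i)) =
        ∑ k ∈ Finset.range N, n.choose k * d ^ (n - k)) ∧
    Tendsto (fun n : ℕ =>
        (degMap ((fun f => compMap f (phiJordan d N))^[n] (fun i => X i)) : ℝ) /
          ((d : ℝ) ^ n * (n : ℝ) ^ (N - 1)))
      atTop (𝓝 (1 / ((N - 1).factorial * (d : ℝ) ^ (N - 1)))) := by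
  have hd0 : (0:ℝ) < d := by exact_mod_cast (by omega : 0 < d)
  refine ⟨fun n _ => degMap_iter d N hN n, ?_⟩
  have heq : (fun n : ℕ =>
        (degMap ((fun f => compMap f (phiJordan d N))^[n] (fun i => X i)) : ℝ) /
          ((d : ℝ) ^ n * (n : ℝ) ^ (N - 1)))
      =ᶠ[atTop] fun n : ℕ =>
        ∑ k ∈ Finset.range N, (n.choose k : ℝ) / ((d:ℝ)^k * (n:ℝ)^(N-1)) := by
    filter_upwards [eventually_ge_atTop N] with n hn
    rw [degMap_iter d N hN n]
    push_cast
    rw [Finset.sum_div]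
    apply Finset.sum_congr rfl
    intro k hk
    rw [Finset.mem_range] at hk
    have hdn : (d:ℝ)^n = (d:ℝ)^(n-k) * (d:ℝ)^k := by
      rw [← pow_add]
      congr 1
      omega
    rw [hdn, mul_comm ((n.choose k : ℝ)) _, mul_assoc, mul_div_mul_left _ _ (by positivity)]
  rw [tendsto_congr' heq]
  have hsum : Tendsto (fun n : ℕ =>
        ∑ k ∈ Finset.range N, (n.choose k : ℝ) / ((d:ℝ)^k * (n:ℝ)^(N-1)))
      atTop (𝓝 (∑ k ∈ Finset.range N,
        (1/(d:ℝ)^k) * (if k = N-1 then 1 / (k.factorial : ℝ) else 0))) := by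
    apply tendsto_finset_sum
    intro k hk
    rw [Finset.mem_range] at hk
    have h1 := (choose_div_pow_tendsto k (N-1) (by omega)).const_mul (1/(d:ℝ)^k)
    apply h1.congr
    intro n
    field_simp
  have hsum2 : ∑ k ∈ Finset.range N,
      (1/(d:ℝ)^k) * (if k = N-1 then 1 / (k.factorial : ℝ) else 0)
      = 1 / ((N - 1).factorial * (d : ℝ) ^ (N - 1)) := by
    have hterm : ∀ k ∈ Finset.range N,
        (1/(d:ℝ)^k) * (if k = N-1 then 1 / (k.factorial : ℝ) else 0)
          = if k = N-1 then (1/(d:ℝ)^k) * (1 / (k.factorial : ℝ)) else 0 := by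
      intro k _
      split_ifs <;> simp
    rw [Finset.sum_congr rfl hterm]
    rw [Finset.sum_ite_eq' (Finset.range N) (N-1)
      (fun k => (1/(d:ℝ)^k) * (1 / (k.factorial : ℝ)))]
    rw [if_pos (Finset.mem_range.mpr (by omega))]
    rw [div_mul_div_comm, one_mul, mul_comm]
  rw [← hsum2]
  exact hsum
end
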